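/- Suppose σ* maximizes P(Y*(σ)) among all σ ∈ ℝ^n with σ_i ≥ 0 and Σ_i σ_i ≤ 1 (the success probability objective). Then diag(σ*)·G maximizes the spectral radius among all such feasible allocations: for every σ ∈ ℝ^n with σ_i ≥ 0 and Σ_i σ_i ≤ 1, the spectral radius ρ(diag(σ)·G) is at most ρ(diag(σ*)·G). -/

import Mathlib

/-!
Let `ρ = max {vᵀGv : v ∈ Δ}` over the standard simplex `Δ`, attained at `u`. For feasible `σ`,
an eigenpair `(μ, x)` of `diag(σ)·G` gives `|μ|·|x| ≤ σ ∘ G|x|`; testing this against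
`v = σ ∘ G|x|` and using Cauchy–Schwarz together with `vᵀGv ≤ ρ (∑ v)²` yields `|μ| ≤ ρ`.

At `u` the first-order conditions `uᵢ (Gu)ᵢ = ρ uᵢ` make the equilibrium a multiple `θ u`,
`θ = c / (1 - cβρ)` with `c = P'(Y*(u))`: otherwise `a - θ u` would be an eigenvector of
`diag(u)·G` with eigenvalue `1 / (cβ) > ρ`. Hence `Y*(u) = θ + (β/2) ρ θ²`. At `σ*`, if `r` is
the top eigenvalue of `diag(√σ*)·G·diag(√σ*)`, the same expression with `P'(Y*(σ*))` and `r`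
bounds `Y*(σ*)` from above. Optimality gives `Y*(u) ≤ Y*(σ*)`, hence `P'(Y*(σ*)) ≤ P'(Y*(u))`
by concavity, and monotonicity of the expression forces `ρ ≤ r`. Finally `r` is an eigenvalue
of `diag(σ*)·G`.
-/

open Matrix

/-- The equilibrium conditions: `a` is nonnegative, solves
`(I − P'(Y)·β·diag(σ)·G)·a = P'(Y)·σ`, and `Y = Y(a)`. -/
def eqmCond {n : ℕ} (G : Matrix (Fin n) (Fin n) ℝ) (β : ℝ) (P : ℝ → ℝ)
    (σ a : Fin n → ℝ) (Y : ℝ) : Prop :=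
  (∀ i, 0 ≤ a i) ∧
  ((1 : Matrix (Fin n) (Fin n) ℝ)
      - (deriv P Y * β) • (Matrix.diagonal σ * G)).mulVec a = deriv P Y • σ ∧
  Y = ∑ i, a i + β / 2 * ∑ i, ∑ j, G i j * a i * a j

/-- The spectral radius of a real matrix: the largest modulus of a (complex) eigenvalue. -/
noncomputable def matrixSpectralRadius {n : ℕ} (M : Matrix (Fin n) (Fin n) ℝ) : ENNReal :=
  spectralRadius ℂ (M.map (Complex.ofReal))

open Finset Filter Topology

namespace Matrix

variable {ι R : Type*} [Fintype ι]

section OrderedSemiring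

variable [Semiring R] [PartialOrder R] [IsOrderedRing R] {G : Matrix ι ι R}

theorem mulVec_nonneg_of_nonneg (hG : ∀ i j, 0 ≤ G i j) {x : ι → R} (hx : 0 ≤ x) :
    0 ≤ G *ᵥ x :=
  fun i => dotProduct_nonneg_of_nonneg (hG i) hx

theorem mulVec_mono_of_nonneg (hG : ∀ i j, 0 ≤ G i j) {x y : ι → R} (hxy : x ≤ y) :
    G *ᵥ x ≤ G *ᵥ y :=
  fun i => dotProduct_le_dotProduct_of_nonneg_left hxy (hG i)

end OrderedSemiring

theorem abs_mulVec_le [Ring R] [LinearOrder R] [IsStrictOrderedRing R] {G : Matrix ι ι R}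
    (hG : ∀ i j, 0 ≤ G i j) (x : ι → R) : |G *ᵥ x| ≤ G *ᵥ |x| := fun i => by
  simpa [mulVec, dotProduct, abs_mul, abs_of_nonneg (hG i _)] using
    abs_sum_le_sum_abs (fun j => G i j * x j) univ

section CommSemiring

variable [CommSemiring R] {G : Matrix ι ι R}

theorem IsSymm.dotProduct_mulVec_comm (hG : G.IsSymm) (x y : ι → R) :
    x ⬝ᵥ G *ᵥ y = y ⬝ᵥ G *ᵥ x := by
  rw [dotProduct_mulVec, ← mulVec_transpose, hG.eq, dotProduct_comm]

variable [DecidableEq ι]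

theorem diagonal_mulVec_eq_mul (q x : ι → R) : diagonal q *ᵥ x = q * x :=
  funext (mulVec_diagonal q x)

theorem IsSymm.diagonal_mul_mul_diagonal (hG : G.IsSymm) (q : ι → R) :
    (diagonal q * G * diagonal q).IsSymm := by
  simp [Matrix.IsSymm, transpose_mul, hG.eq, Matrix.mul_assoc]

theorem dotProduct_diagonal_mul_mul_diagonal_mulVec (q x : ι → R) :
    x ⬝ᵥ (diagonal q * G * diagonal q) *ᵥ x = (q * x) ⬝ᵥ G *ᵥ (q * x) := by
  rw [← mulVec_mulVec, ← mulVec_mulVec, diagonal_mulVec_eq_mul, diagonal_mulVec_eq_mul]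
  exact sum_congr rfl fun _ _ => by simp only [Pi.mul_apply]; ring

theorem diagonal_mul_mulVec_eq_smul_of_mul_self [IsDomain R] {q σ : ι → R}
    (hq : q * q = σ) {r : R} (hr : r ≠ 0) {w : ι → R} (hw0 : w ≠ 0)
    (hw : (diagonal q * G * diagonal q) *ᵥ w = r • w) :
    q * w ≠ 0 ∧ (diagonal σ * G) *ᵥ (q * w) = r • (q * w) := by
  have hS : (diagonal q * G * diagonal q) *ᵥ w = q * G *ᵥ (q * w) := by
    rw [← mulVec_mulVec, ← mulVec_mulVec, diagonal_mulVec_eq_mul, diagonal_mulVec_eq_mul]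
  refine ⟨fun h => hw0 ?_, ?_⟩
  · rw [hS, h, mulVec_zero, mul_zero, eq_comm, smul_eq_zero] at hw
    exact hw.resolve_left hr
  · rw [← mulVec_mulVec, diagonal_mulVec_eq_mul, ← hq, mul_assoc, ← hS, hw, mul_smul_comm]

end CommSemiring

theorem mem_spectrum_iff_exists_mulVec_eq_smul {K : Type*} [Field K] [DecidableEq ι]
    {A : Matrix ι ι K} {μ : K} : μ ∈ spectrum K A ↔ ∃ x ≠ 0, A *ᵥ x = μ • x := by
  rw [← spectrum_toLin', ← Module.End.hasEigenvalue_iff_mem_spectrum,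
    Module.End.hasEigenvalue_iff, Submodule.ne_bot_iff]
  simp [and_comm]

theorem IsSymm.exists_eigenvector_forall_dotProduct_mulVec_le [DecidableEq ι] [Nonempty ι]
    {S : Matrix ι ι ℝ} (hS : S.IsSymm) :
    ∃ r : ℝ, (∃ w ≠ 0, S *ᵥ w = r • w) ∧ ∀ x, x ⬝ᵥ S *ᵥ x ≤ r * (x ⬝ᵥ x) := by
  set T := toEuclideanLin S
  have hT : T.IsSymmetric := isSymmetric_toEuclideanLin_iff.mpr hS
  set R : {y : EuclideanSpace ℝ ι // y ≠ 0} → ℝ :=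
    fun y => RCLike.re (inner ℝ (T y) y) / ‖(y : EuclideanSpace ℝ ι)‖ ^ 2
  obtain ⟨w, hw⟩ := hT.hasEigenvalue_iSup_of_finiteDimensional.exists_hasEigenvector
  refine ⟨⨆ y, R y, ⟨w.ofLp, by simpa using hw.2, congrArg WithLp.ofLp hw.apply_eq_smul⟩,
    fun x => ?_⟩
  rcases eq_or_ne x 0 with rfl | hx
  · simp
  have hbdd : BddAbove (Set.range R) :=
    ⟨‖LinearMap.toContinuousLinearMap T‖, by
      rintro _ ⟨y, rfl⟩
      exact (le_abs_self _).trans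
        ((LinearMap.toContinuousLinearMap T).rayleighQuotient_le_norm y)⟩
  have hR : R ⟨WithLp.toLp 2 x, by simpa using hx⟩ = x ⬝ᵥ S *ᵥ x / (x ⬝ᵥ x) := by
    simp only [R, T, EuclideanSpace.real_norm_sq_eq]
    simp [EuclideanSpace.inner_eq_star_dotProduct, dotProduct, sq]
  have hpos : 0 < x ⬝ᵥ x := by simpa using dotProduct_star_self_pos_iff.mpr hx
  rw [← div_le_iff₀ hpos, ← hR]
  exact le_ciSup hbdd _

end Matrix

section MotzkinStraus

theorem exists_isMaxOn_dotProduct_mulVec {ι : Type*} [Fintype ι] [Nonempty ι]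
    (G : Matrix ι ι ℝ) :
    ∃ u ∈ stdSimplex ℝ ι, IsMaxOn (fun v => v ⬝ᵥ G *ᵥ v) (stdSimplex ℝ ι) u := by
  classical
  exact (isCompact_stdSimplex ℝ ι).exists_isMaxOn
    ⟨_, single_mem_stdSimplex ℝ (Classical.arbitrary ι)⟩ (by fun_prop)

variable {ι : Type*} [Fintype ι] {G : Matrix ι ι ℝ} {u : ι → ℝ}

theorem dotProduct_mulVec_le_of_isMaxOn (hmax : IsMaxOn (fun v => v ⬝ᵥ G *ᵥ v) (stdSimplex ℝ ι) u)
    {v : ι → ℝ} (hv : 0 ≤ v) : v ⬝ᵥ G *ᵥ v ≤ (u ⬝ᵥ G *ᵥ u) * (∑ i, v i) ^ 2 := by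
  rcases (sum_nonneg fun i _ => hv i : 0 ≤ ∑ i, v i).eq_or_lt with hs | hs
  · obtain rfl : v = 0 := funext fun i =>
      (sum_eq_zero_iff_of_nonneg fun j _ => hv j).1 hs.symm i (mem_univ i)
    simp
  set s := ∑ i, v i
  have hmem : s⁻¹ • v ∈ stdSimplex ℝ ι :=
    ⟨fun i => mul_nonneg (inv_nonneg.2 hs.le) (hv i), by
      simp [← mul_sum, s, inv_mul_cancel₀ hs.ne']⟩
  have hle : s⁻¹ * (s⁻¹ * (v ⬝ᵥ G *ᵥ v)) ≤ u ⬝ᵥ G *ᵥ u := by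
    simpa [mulVec_smul] using hmax hmem
  calc v ⬝ᵥ G *ᵥ v = s ^ 2 * (s⁻¹ * (s⁻¹ * (v ⬝ᵥ G *ᵥ v))) := by field_simp
    _ ≤ s ^ 2 * (u ⬝ᵥ G *ᵥ u) := by gcongr
    _ = _ := mul_comm _ _

theorem mulVec_apply_le_of_isMaxOn [DecidableEq ι] (hG : G.IsSymm) (hu_mem : u ∈ stdSimplex ℝ ι)
    (hmax : IsMaxOn (fun v => v ⬝ᵥ G *ᵥ v) (stdSimplex ℝ ι) u) (i : ι) :
    (G *ᵥ u) i ≤ u ⬝ᵥ G *ᵥ u := by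
  set ρ := u ⬝ᵥ G *ᵥ u
  set e : ι → ℝ := Pi.single i 1
  have key : ∀ t > 0, 2 * ((G *ᵥ u) i - ρ) ≤ t * (ρ - G i i) := by
    intro t ht
    have hv : 0 ≤ u + t • e :=
      add_nonneg hu_mem.1 (smul_nonneg ht.le (Pi.single_nonneg.2 zero_le_one))
    have h := dotProduct_mulVec_le_of_isMaxOn hmax hv
    have hsum : ∑ j, (u + t • e) j = 1 + t := by
      simp [e, sum_add_distrib, hu_mem.2, ← mul_sum]
    have hexp : (u + t • e) ⬝ᵥ G *ᵥ (u + t • e) = ρ + 2 * t * (G *ᵥ u) i + t ^ 2 * G i i := by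
      rw [mulVec_add, dotProduct_add, add_dotProduct, add_dotProduct,
        hG.dotProduct_mulVec_comm u (t • e)]
      simp only [mulVec_smul, smul_dotProduct, dotProduct_smul, e, single_one_dotProduct,
        mulVec_single_one, col_apply, smul_eq_mul, ρ]
      ring
    rw [hexp, hsum] at h
    nlinarith
  have hlim : Tendsto (fun t : ℝ => t * (ρ - G i i)) (𝓝[>] 0) (𝓝 0) := by
    simpa using ((continuous_id.mul continuous_const).tendsto (0 : ℝ)).mono_left
      (nhdsWithin_le_nhds (s := Set.Ioi 0)) (f := fun t : ℝ => t * (ρ - G i i))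
  have := ge_of_tendsto hlim (eventually_nhdsWithin_of_forall key)
  linarith

theorem mul_mulVec_eq_of_isMaxOn [DecidableEq ι] (hG : G.IsSymm) (hu_mem : u ∈ stdSimplex ℝ ι)
    (hmax : IsMaxOn (fun v => v ⬝ᵥ G *ᵥ v) (stdSimplex ℝ ι) u) :
    u * G *ᵥ u = (u ⬝ᵥ G *ᵥ u) • u := by
  set ρ := u ⬝ᵥ G *ᵥ u
  have hle : ∀ i, u i * (G *ᵥ u) i ≤ ρ * u i := fun i => by
    rw [mul_comm ρ]
    exact mul_le_mul_of_nonneg_left (mulVec_apply_le_of_isMaxOn hG hu_mem hmax i) (hu_mem.1 i)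
  have hsum : ∑ i, (ρ * u i - u i * (G *ᵥ u) i) = 0 := by
    rw [sum_sub_distrib, ← mul_sum, hu_mem.2, mul_one]
    exact sub_eq_zero.2 rfl
  funext i
  have := (sum_eq_zero_iff_of_nonneg fun i _ => sub_nonneg.2 (hle i)).1 hsum i (mem_univ i)
  simp only [Pi.mul_apply, Pi.smul_apply, smul_eq_mul]
  linarith

theorem pos_of_isMaxOn [DecidableEq ι] (hG : ∀ i j, 0 ≤ G i j) (hG0 : G ≠ 0)
    (hmax : IsMaxOn (fun v => v ⬝ᵥ G *ᵥ v) (stdSimplex ℝ ι) u) : 0 < u ⬝ᵥ G *ᵥ u := by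
  obtain ⟨i, j, hij⟩ : ∃ i j, 0 < G i j := by
    by_contra! h
    exact hG0 (Matrix.ext fun i j => le_antisymm (h i j) (hG i j))
  have hi : (0 : ι → ℝ) ≤ Pi.single i 1 := Pi.single_nonneg.2 zero_le_one
  have hj : (0 : ι → ℝ) ≤ Pi.single j 1 := Pi.single_nonneg.2 zero_le_one
  set v : ι → ℝ := Pi.single i 1 + Pi.single j 1
  have hv : 0 ≤ v := add_nonneg hi hj
  have hGv : G i j ≤ v ⬝ᵥ G *ᵥ v := calc
    G i j = Pi.single i 1 ⬝ᵥ G *ᵥ Pi.single j 1 := by simp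
    _ ≤ Pi.single i 1 ⬝ᵥ G *ᵥ v :=
      dotProduct_le_dotProduct_of_nonneg_left
        (mulVec_mono_of_nonneg hG (le_add_of_nonneg_left hi)) hi
    _ ≤ v ⬝ᵥ G *ᵥ v :=
      dotProduct_le_dotProduct_of_nonneg_right (le_add_of_nonneg_right hj)
        (mulVec_nonneg_of_nonneg hG hv)
  have := hij.trans_le (hGv.trans (dotProduct_mulVec_le_of_isMaxOn hmax hv))
  exact pos_of_mul_pos_left this (sq_nonneg _)

theorem le_of_smul_le_mul_mulVec {ρ : ℝ} (hG : ∀ i j, 0 ≤ G i j) (hρ : 0 ≤ ρ)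
    (hQ : ∀ v, 0 ≤ v → v ⬝ᵥ G *ᵥ v ≤ ρ * (∑ i, v i) ^ 2) {σ : ι → ℝ} (hσ : 0 ≤ σ)
    (hσ1 : ∑ i, σ i ≤ 1) {η : ι → ℝ} (hη : 0 ≤ η) (hη0 : η ≠ 0) {μ : ℝ}
    (h : μ • η ≤ σ * G *ᵥ η) : μ ≤ ρ := by
  set ξ := G *ᵥ η
  have hξ : 0 ≤ ξ := mulVec_nonneg_of_nonneg hG hη
  set v := σ * ξ
  have hv : 0 ≤ v := mul_nonneg hσ hξ
  by_contra! hμ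
  obtain ⟨i, hi⟩ : ∃ i, 0 < η i := by
    by_contra! h'
    exact hη0 (le_antisymm h' hη)
  have hvi : 0 < v i := (mul_pos (hρ.trans_lt hμ) hi).trans_le (h i)
  have hξi : 0 < ξ i := pos_of_mul_pos_right hvi (hσ i)
  have hD : 0 < v ⬝ᵥ ξ := (mul_pos hvi hξi).trans_le
    (single_le_sum (f := fun j => v j * ξ j) (fun j _ => mul_nonneg (hv j) (hξ j)) (mem_univ i))
  have hμD : μ * (v ⬝ᵥ ξ) ≤ v ⬝ᵥ G *ᵥ v := by
    rw [← smul_eq_mul, ← dotProduct_smul, ← mulVec_smul]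
    exact dotProduct_le_dotProduct_of_nonneg_left (mulVec_mono_of_nonneg hG h) hv
  have hCS : (∑ i, v i) ^ 2 ≤ v ⬝ᵥ ξ := calc
    (∑ i, v i) ^ 2 ≤ (∑ i, σ i) * ∑ i, σ i * ξ i ^ 2 :=
      sum_sq_le_sum_mul_sum_of_sq_le_mul _ (fun i _ => hσ i)
        (fun i _ => mul_nonneg (hσ i) (sq_nonneg _))
        (fun i _ => le_of_eq (by simp only [v, Pi.mul_apply]; ring))
    _ ≤ ∑ i, σ i * ξ i ^ 2 :=
      mul_le_of_le_one_left (sum_nonneg fun i _ => mul_nonneg (hσ i) (sq_nonneg _)) hσ1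
    _ = v ⬝ᵥ ξ := sum_congr rfl fun i _ => by simp only [v, Pi.mul_apply]; ring
  have := hμD.trans ((hQ v hv).trans (mul_le_mul_of_nonneg_left hCS hρ))
  exact hμ.not_ge (le_of_mul_le_mul_right this hD)

end MotzkinStraus

section SpectralBound

variable {ι : Type*} [Fintype ι] [DecidableEq ι] {G : Matrix ι ι ℝ} {ρ : ℝ}

theorem norm_le_of_mem_spectrum_diagonal_mul (hG : ∀ i j, 0 ≤ G i j) (hρ : 0 ≤ ρ)
    (hQ : ∀ v, 0 ≤ v → v ⬝ᵥ G *ᵥ v ≤ ρ * (∑ i, v i) ^ 2) {σ : ι → ℝ} (hσ : 0 ≤ σ)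
    (hσ1 : ∑ i, σ i ≤ 1) {μ : ℂ}
    (hμ : μ ∈ spectrum ℂ ((diagonal σ * G).map Complex.ofReal)) : ‖μ‖ ≤ ρ := by
  obtain ⟨x, hx0, hx⟩ := mem_spectrum_iff_exists_mulVec_eq_smul.1 hμ
  refine le_of_smul_le_mul_mulVec hG hρ hQ hσ hσ1 (η := fun i => ‖x i‖)
    (fun i => norm_nonneg _) ?_ fun i => ?_
  · contrapose! hx0
    funext i
    simpa using congrFun hx0 i
  calc ‖μ‖ * ‖x i‖ = ‖((diagonal σ * G).map Complex.ofReal *ᵥ x) i‖ := by simp [hx]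
    _ = ‖∑ j, ((σ i * G i j : ℝ) : ℂ) * x j‖ := by simp [mulVec, dotProduct, diagonal_mul]
    _ ≤ ∑ j, σ i * G i j * ‖x j‖ := norm_sum_le_of_le _ fun j _ => by
      rw [norm_mul, Complex.norm_real, Real.norm_of_nonneg (mul_nonneg (hσ i) (hG i j))]
    _ = σ i * (G *ᵥ fun i => ‖x i‖) i := by simp [mulVec, dotProduct, mul_sum, mul_assoc]

end SpectralBound

theorem matrixSpectralRadius_diagonal_mul_le {n : ℕ} {G : Matrix (Fin n) (Fin n) ℝ} {ρ : ℝ}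
    (hG : ∀ i j, 0 ≤ G i j) (hρ : 0 ≤ ρ) (hQ : ∀ v, 0 ≤ v → v ⬝ᵥ G *ᵥ v ≤ ρ * (∑ i, v i) ^ 2)
    {σ : Fin n → ℝ} (hσ : 0 ≤ σ) (hσ1 : ∑ i, σ i ≤ 1) :
    matrixSpectralRadius (diagonal σ * G) ≤ ENNReal.ofReal ρ :=
  iSup₂_le fun μ hμ => by
    rw [← enorm_eq_nnnorm, ← ofReal_norm]
    exact ENNReal.ofReal_le_ofReal (norm_le_of_mem_spectrum_diagonal_mul hG hρ hQ hσ hσ1 hμ)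

theorem ofReal_le_matrixSpectralRadius {n : ℕ} {M : Matrix (Fin n) (Fin n) ℝ} {r : ℝ}
    {x : Fin n → ℝ} (hx : x ≠ 0) (h : M *ᵥ x = r • x) :
    ENNReal.ofReal r ≤ matrixSpectralRadius M := by
  have hr : (r : ℂ) ∈ spectrum ℂ (M.map Complex.ofReal) := by
    refine mem_spectrum_iff_exists_mulVec_eq_smul.2 ⟨fun i => x i, ?_, ?_⟩
    · simpa [funext_iff] using hx
    · funext i
      simpa [mulVec, dotProduct] using congrArg Complex.ofReal (congrFun h i)
  calc ENNReal.ofReal r ≤ ENNReal.ofReal ‖(r : ℂ)‖ :=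
        ENNReal.ofReal_le_ofReal (by simpa using le_abs_self r)
    _ ≤ matrixSpectralRadius M := by
      rw [ofReal_norm, enorm_eq_nnnorm]
      exact le_iSup₂ (f := fun k (_ : k ∈ spectrum ℂ (M.map Complex.ofReal)) => (‖k‖₊ : ENNReal))
        _ hr

theorem deriv_pos_of_strictMonoOn_of_concaveOn {P : ℝ → ℝ} {b : ℝ}
    (hP_mono : StrictMonoOn P (Set.Ici b)) (hP_conc : ConcaveOn ℝ (Set.Ici b) P) {y : ℝ}
    (hy : b ≤ y) (hP_diff : DifferentiableAt ℝ P y) : 0 < deriv P y := by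
  have hy1 : y ∈ Set.Ici b := hy
  have hy2 : y + 1 ∈ Set.Ici b := by simp only [Set.mem_Ici]; linarith
  have hslope := hP_conc.slope_le_deriv hy1 hy2 (lt_add_one y) hP_diff
  rw [slope_def_field, add_sub_cancel_left, div_one] at hslope
  linarith [hP_mono hy1 hy2 (lt_add_one y)]

-- With `c = P'(Y)`, the equilibrium at a maximizer `u` of value `ρ` is `eqmScale β c ρ • u`,
-- and its team performance is `eqmPerf β c ρ`.
noncomputable def eqmScale (β c ρ : ℝ) : ℝ := c / (1 - c * β * ρ)

noncomputable def eqmPerf (β c ρ : ℝ) : ℝ := eqmScale β c ρ + β / 2 * ρ * eqmScale β c ρ ^ 2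

theorem eqmPerf_lt_eqmPerf {β c₁ c₂ ρ₁ ρ₂ : ℝ} (hβ : 0 < β) (hc₁ : 0 < c₁) (hc : c₁ ≤ c₂)
    (hρ₁ : 0 ≤ ρ₁) (hρ : ρ₁ < ρ₂) (h₂ : c₂ * β * ρ₂ < 1) :
    eqmPerf β c₁ ρ₁ < eqmPerf β c₂ ρ₂ := by
  have hlt : c₁ * β * ρ₁ < c₂ * β * ρ₂ := by
    calc c₁ * β * ρ₁ ≤ c₂ * β * ρ₁ := by gcongr
      _ < c₂ * β * ρ₂ := by have := hc₁.trans_le hc; gcongr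
  have hθ₁ : 0 ≤ eqmScale β c₁ ρ₁ := div_nonneg hc₁.le (by linarith)
  have hθ : eqmScale β c₁ ρ₁ < eqmScale β c₂ ρ₂ := by
    unfold eqmScale
    calc c₁ / (1 - c₁ * β * ρ₁) ≤ c₂ / (1 - c₁ * β * ρ₁) := by gcongr; linarith
      _ < c₂ / (1 - c₂ * β * ρ₂) := by gcongr; linarith
  unfold eqmPerf
  gcongr

namespace eqmCond

variable {n : ℕ} {G : Matrix (Fin n) (Fin n) ℝ} {β : ℝ} {P : ℝ → ℝ} {σ a : Fin n → ℝ} {Y : ℝ}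

theorem eq_smul_add_smul (h : eqmCond G β P σ a Y) :
    a = deriv P Y • σ + (deriv P Y * β) • (σ * G *ᵥ a) := by
  have h2 := h.2.1
  rw [sub_mulVec, one_mulVec, smul_mulVec, ← mulVec_mulVec, diagonal_mulVec_eq_mul,
    sub_eq_iff_eq_add] at h2
  exact h2

theorem perf_eq (h : eqmCond G β P σ a Y) : Y = ∑ i, a i + β / 2 * (a ⬝ᵥ G *ᵥ a) := by
  rw [h.2.2]
  congr 2
  exact sum_congr rfl fun i _ => by
    rw [mulVec, dotProduct, mul_sum]
    exact sum_congr rfl fun j _ => by ring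

theorem perf_nonneg (hG : ∀ i j, 0 ≤ G i j) (hβ : 0 ≤ β) (h : eqmCond G β P σ a Y) : 0 ≤ Y := by
  rw [h.perf_eq]
  have ha : 0 ≤ a := h.1
  exact add_nonneg (sum_nonneg fun i _ => ha i)
    (mul_nonneg (by positivity) (dotProduct_nonneg_of_nonneg ha (mulVec_nonneg_of_nonneg hG ha)))

theorem deriv_mul_mul_lt_one_of_isMaxOn (hG : G.IsSymm) (hG0 : ∀ i j, 0 ≤ G i j) (hG_ne : G ≠ 0)
    {u : Fin n → ℝ} (hu_mem : u ∈ stdSimplex ℝ (Fin n))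
    (hmax : IsMaxOn (fun v => v ⬝ᵥ G *ᵥ v) (stdSimplex ℝ (Fin n)) u) (hc : 0 < deriv P Y)
    (h : eqmCond G β P u a Y) : deriv P Y * β * (u ⬝ᵥ G *ᵥ u) < 1 := by
  set c := deriv P Y
  set ρ := u ⬝ᵥ G *ᵥ u
  have hρ : 0 < ρ := pos_of_isMaxOn hG0 hG_ne hmax
  have hKKT := mul_mulVec_eq_of_isMaxOn hG hu_mem hmax
  set E := (G *ᵥ u) ⬝ᵥ a
  have hE0 : 0 ≤ E := dotProduct_nonneg_of_nonneg (mulVec_nonneg_of_nonneg hG0 hu_mem.1) h.1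
  have hGu : (G *ᵥ u) ⬝ᵥ u = ρ := dotProduct_comm _ _
  have hmul : (G *ᵥ u) ⬝ᵥ (u * G *ᵥ a) = ρ * E := calc
    (G *ᵥ u) ⬝ᵥ (u * G *ᵥ a) = (u * G *ᵥ u) ⬝ᵥ (G *ᵥ a) :=
      sum_congr rfl fun _ _ => by simp only [Pi.mul_apply]; ring
    _ = ρ * E := by
      rw [hKKT, smul_dotProduct, smul_eq_mul, hG.dotProduct_mulVec_comm u a, dotProduct_comm a]
  have hE : E = c * ρ + c * β * ρ * E := calc
    E = (G *ᵥ u) ⬝ᵥ (c • u + (c * β) • (u * G *ᵥ a)) := by rw [← h.eq_smul_add_smul]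
    _ = c * ρ + c * β * ρ * E := by
      rw [dotProduct_add, dotProduct_smul, dotProduct_smul, hGu, hmul, smul_eq_mul, smul_eq_mul]
      ring
  by_contra! h1
  nlinarith [mul_pos hc hρ, mul_le_mul_of_nonneg_right h1 hE0]

theorem eq_eqmScale_smul_of_isMaxOn (hG : G.IsSymm) (hG0 : ∀ i j, 0 ≤ G i j)
    {u : Fin n → ℝ} (hu_mem : u ∈ stdSimplex ℝ (Fin n))
    (hmax : IsMaxOn (fun v => v ⬝ᵥ G *ᵥ v) (stdSimplex ℝ (Fin n)) u) (hβ : 0 < β)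
    (hc : 0 < deriv P Y) (hcρ : deriv P Y * β * (u ⬝ᵥ G *ᵥ u) < 1) (h : eqmCond G β P u a Y) :
    a = eqmScale β (deriv P Y) (u ⬝ᵥ G *ᵥ u) • u := by
  set c := deriv P Y
  set ρ := u ⬝ᵥ G *ᵥ u
  set θ := eqmScale β c ρ
  have hθ : θ * (1 - c * β * ρ) = c := div_mul_cancel₀ _ (sub_pos.2 hcρ).ne'
  have hKKT := mul_mulVec_eq_of_isMaxOn hG hu_mem hmax
  set b := a - θ • u
  have hb : ∀ i, b i = c * β * (u i * (G *ᵥ b) i) := fun i => by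
    have hai := congrFun h.eq_smul_add_smul i
    have hKi := congrFun hKKT i
    simp only [b, Pi.sub_apply, Pi.smul_apply, Pi.mul_apply, Pi.add_apply, mulVec_sub,
      mulVec_smul, smul_eq_mul] at hai hKi ⊢
    linear_combination hai + c * β * θ * hKi - u i * hθ
  by_contra hne
  have hbound : (c * β)⁻¹ • |b| ≤ u * G *ᵥ |b| := fun i => calc
    (c * β)⁻¹ * |b i| = u i * |(G *ᵥ b) i| := by
      rw [hb i, abs_mul, abs_of_pos (by positivity : 0 < c * β),
        inv_mul_cancel_left₀ (by positivity), abs_mul, abs_of_nonneg (hu_mem.1 i)]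
    _ ≤ u i * (G *ᵥ |b|) i := mul_le_mul_of_nonneg_left (abs_mulVec_le hG0 b i) (hu_mem.1 i)
  have hρ0 : 0 ≤ ρ := dotProduct_nonneg_of_nonneg hu_mem.1 (mulVec_nonneg_of_nonneg hG0 hu_mem.1)
  have := le_of_smul_le_mul_mulVec hG0 hρ0 (fun v hv => dotProduct_mulVec_le_of_isMaxOn hmax hv)
    hu_mem.1 hu_mem.2.le (abs_nonneg b) (by simpa [b, sub_eq_zero] using hne) hbound
  rw [inv_le_iff_one_le_mul₀ (by positivity)] at this
  linarith

theorem eq_eqmPerf_of_isMaxOn (hG : G.IsSymm) (hG0 : ∀ i j, 0 ≤ G i j)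
    {u : Fin n → ℝ} (hu_mem : u ∈ stdSimplex ℝ (Fin n))
    (hmax : IsMaxOn (fun v => v ⬝ᵥ G *ᵥ v) (stdSimplex ℝ (Fin n)) u) (hβ : 0 < β)
    (hc : 0 < deriv P Y) (hcρ : deriv P Y * β * (u ⬝ᵥ G *ᵥ u) < 1) (h : eqmCond G β P u a Y) :
    Y = eqmPerf β (deriv P Y) (u ⬝ᵥ G *ᵥ u) := by
  have ha := h.eq_eqmScale_smul_of_isMaxOn hG hG0 hu_mem hmax hβ hc hcρ
  refine h.perf_eq.trans ?_
  rw [ha, eqmPerf]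
  simp only [Pi.smul_apply, smul_eq_mul, ← mul_sum, hu_mem.2, mulVec_smul, smul_dotProduct,
    dotProduct_smul]
  ring

theorem perf_le_eqmPerf (hG0 : ∀ i j, 0 ≤ G i j) (hσ : 0 ≤ σ) (hσ1 : ∑ i, σ i ≤ 1) {r : ℝ}
    (hr0 : 0 ≤ r) (hr : ∀ x, ((fun i => √(σ i)) * x) ⬝ᵥ G *ᵥ ((fun i => √(σ i)) * x) ≤ r * (x ⬝ᵥ x))
    (hβ : 0 ≤ β) (hc : 0 < deriv P Y) (hcr : deriv P Y * β * r < 1) (h : eqmCond G β P σ a Y) :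
    Y ≤ eqmPerf β (deriv P Y) r := by
  set c := deriv P Y
  set q : Fin n → ℝ := fun i => √(σ i)
  have hq : ∀ i, q i * q i = σ i := fun i => Real.mul_self_sqrt (hσ i)
  have ha : 0 ≤ a := h.1
  -- `z = a / √σ` off the zeros of `σ`
  set z : Fin n → ℝ := fun i => q i * (c + c * β * (G *ᵥ a) i)
  have haz : a = q * z := funext fun i => by
    have := congrFun h.eq_smul_add_smul i
    simp only [Pi.add_apply, Pi.smul_apply, Pi.mul_apply, smul_eq_mul] at this
    simp only [Pi.mul_apply, z, ← mul_assoc, hq]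
    linear_combination this
  set B := ∑ i, a i
  set T := a ⬝ᵥ G *ᵥ a
  set X := z ⬝ᵥ z
  have hX : X = c * B + c * β * T := by
    have hz : ∀ i, z i * z i = c * a i + c * β * (a i * (G *ᵥ a) i) := fun i => by
      have hai := congrFun h.eq_smul_add_smul i
      simp only [Pi.add_apply, Pi.smul_apply, Pi.mul_apply, smul_eq_mul] at hai
      simp only [z]
      linear_combination (c + c * β * (G *ᵥ a) i) ^ 2 * hq i - (c + c * β * (G *ᵥ a) i) * hai
    simp only [X, dotProduct, hz, sum_add_distrib, ← mul_sum, B, T]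
  have hT : T ≤ r * X := by simpa only [T, ← haz] using hr z
  have hX0 : 0 ≤ X := sum_nonneg fun i _ => mul_self_nonneg (z i)
  have hB : B ^ 2 ≤ X := calc
    B ^ 2 = (∑ i, q i * z i) ^ 2 := by simp only [B, haz, Pi.mul_apply]
    _ ≤ (∑ i, q i ^ 2) * ∑ i, z i ^ 2 := sum_mul_sq_le_sq_mul_sq _ _ _
    _ = (∑ i, σ i) * X := by simp only [X, dotProduct, sq, hq]
    _ ≤ X := mul_le_of_le_one_left hX0 hσ1
  have hB0 : 0 ≤ B := sum_nonneg fun i _ => ha i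
  have hT0 : 0 ≤ T := dotProduct_nonneg_of_nonneg ha (mulVec_nonneg_of_nonneg hG0 ha)
  set m := eqmScale β c r
  have hd : 0 < 1 - c * β * r := sub_pos.2 hcr
  have hm : m * (1 - c * β * r) = c := div_mul_cancel₀ _ hd.ne'
  have hm0 : 0 ≤ m := div_nonneg hc.le hd.le
  have hXm : X ≤ m * B := by
    refine le_of_mul_le_mul_left ?_ hd
    have := mul_le_mul_of_nonneg_left hT (by positivity : 0 ≤ c * β)
    linear_combination hX + this - B * hm
  have hBm : B ≤ m := by nlinarith
  have hTm : T ≤ r * m ^ 2 := calc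
    T ≤ r * X := hT
    _ ≤ r * (m * m) := by gcongr; exact hXm.trans (by gcongr)
    _ = r * m ^ 2 := by ring
  calc Y = B + β / 2 * T := h.perf_eq
    _ ≤ m + β / 2 * (r * m ^ 2) := by gcongr
    _ = eqmPerf β c r := by rw [eqmPerf]; ring

end eqmCond

theorem le_of_eqmCond_of_isMaxOn {n : ℕ} {G : Matrix (Fin n) (Fin n) ℝ} {β : ℝ} {P : ℝ → ℝ}
    (hG : G.IsSymm) (hG0 : ∀ i j, 0 ≤ G i j) (hG_ne : G ≠ 0) (hβ : 0 < β)
    (hP_mono : StrictMonoOn P (Set.Ici 0)) (hP_conc : ConcaveOn ℝ (Set.Ici 0) P)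
    (hP_diff : ∀ y, 0 ≤ y → DifferentiableAt ℝ P y)
    {u a : Fin n → ℝ} {Y : ℝ} (hu_mem : u ∈ stdSimplex ℝ (Fin n))
    (hmax : IsMaxOn (fun v => v ⬝ᵥ G *ᵥ v) (stdSimplex ℝ (Fin n)) u) (hu : eqmCond G β P u a Y)
    {σ b : Fin n → ℝ} {Z : ℝ} (hσ : 0 ≤ σ) (hσ1 : ∑ i, σ i ≤ 1) (hs : eqmCond G β P σ b Z)
    {r : ℝ} (hr : ∀ x, ((fun i => √(σ i)) * x) ⬝ᵥ G *ᵥ ((fun i => √(σ i)) * x) ≤ r * (x ⬝ᵥ x))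
    (hP : P Y ≤ P Z) : u ⬝ᵥ G *ᵥ u ≤ r := by
  have hY := hu.perf_nonneg hG0 hβ.le
  have hZ := hs.perf_nonneg hG0 hβ.le
  have hYZ : Y ≤ Z := (hP_mono.le_iff_le hY hZ).1 hP
  have hcZ := deriv_pos_of_strictMonoOn_of_concaveOn hP_mono hP_conc hZ (hP_diff Z hZ)
  have hc : deriv P Z ≤ deriv P Y := hP_conc.antitoneOn_deriv hP_diff hY hZ hYZ
  have hcY : 0 < deriv P Y := hcZ.trans_le hc
  have hr0 : 0 ≤ r := by
    have hqu : 0 ≤ (fun i => √(σ i)) * u := mul_nonneg (fun i => Real.sqrt_nonneg _) hu_mem.1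
    have hu0 : 0 < u ⬝ᵥ u := by
      have : u ≠ 0 := fun h0 => by simpa [h0] using hu_mem.2
      simpa using dotProduct_star_self_pos_iff.mpr this
    exact nonneg_of_mul_nonneg_left
      ((dotProduct_nonneg_of_nonneg hqu (mulVec_nonneg_of_nonneg hG0 hqu)).trans (hr u)) hu0
  by_contra! hrρ
  have hcρ := hu.deriv_mul_mul_lt_one_of_isMaxOn hG hG0 hG_ne hu_mem hmax hcY
  have hcr : deriv P Z * β * r < 1 := lt_of_le_of_lt (by gcongr) hcρ
  have := (hs.perf_le_eqmPerf hG0 hσ hσ1 hr0 hr hβ.le hcZ hcr).trans_lt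
    (eqmPerf_lt_eqmPerf hβ hcZ hc hr0 hrρ hcρ)
  rw [← hu.eq_eqmPerf_of_isMaxOn hG hG0 hu_mem hmax hβ hcY hcρ] at this
  linarith

theorem statement_12_general {n : ℕ} (G : Matrix (Fin n) (Fin n) ℝ)
    (hG_symm : G.IsSymm)
    (hG_nonneg : ∀ i j, 0 ≤ G i j)
    (hG_ne : G ≠ 0)
    (β : ℝ) (hβ : 0 < β)
    (P : ℝ → ℝ)
    (hP_mono : StrictMonoOn P (Set.Ici (0:ℝ)))
    (hP_conc : ConcaveOn ℝ (Set.Ici (0:ℝ)) P)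
    (hP_diff : ∀ y : ℝ, 0 ≤ y → DifferentiableAt ℝ P y)
    (astar : (Fin n → ℝ) → Fin n → ℝ) (Ystar : (Fin n → ℝ) → ℝ)
    (heqm : ∀ σ : Fin n → ℝ, (∀ i, 0 ≤ σ i) → eqmCond G β P σ (astar σ) (Ystar σ))
    (σstar : Fin n → ℝ) (hσnn : ∀ i, 0 ≤ σstar i) (hσsum : ∑ i, σstar i ≤ 1)
    (hopt : ∀ σ : Fin n → ℝ, (∀ i, 0 ≤ σ i) → ∑ i, σ i ≤ 1 →
      P (Ystar σ) ≤ P (Ystar σstar)) :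
    ∀ σ : Fin n → ℝ, (∀ i, 0 ≤ σ i) → ∑ i, σ i ≤ 1 →
      matrixSpectralRadius (Matrix.diagonal σ * G)
        ≤ matrixSpectralRadius (Matrix.diagonal σstar * G) := by
  intro σ hσ hσ1
  rcases isEmpty_or_nonempty (Fin n) with _ | _
  · rw [Subsingleton.elim (diagonal σ * G) (diagonal σstar * G)]
  obtain ⟨u, hu_mem, hmax⟩ := exists_isMaxOn_dotProduct_mulVec G
  have hρ : 0 < u ⬝ᵥ G *ᵥ u := pos_of_isMaxOn hG_nonneg hG_ne hmax
  obtain ⟨r, ⟨w, hw0, hw⟩, hr⟩ := (hG_symm.diagonal_mul_mul_diagonal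
    fun i => √(σstar i)).exists_eigenvector_forall_dotProduct_mulVec_le
  simp only [dotProduct_diagonal_mul_mul_diagonal_mulVec] at hr
  have hρr := le_of_eqmCond_of_isMaxOn hG_symm hG_nonneg hG_ne hβ hP_mono hP_conc hP_diff
    hu_mem hmax (heqm u hu_mem.1) hσnn hσsum (heqm σstar hσnn) hr (hopt u hu_mem.1 hu_mem.2.le)
  obtain ⟨hqw0, hqw⟩ := diagonal_mul_mulVec_eq_smul_of_mul_self
    (funext fun i => Real.mul_self_sqrt (hσnn i)) (hρ.trans_le hρr).ne' hw0 hw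
  calc matrixSpectralRadius (diagonal σ * G) ≤ ENNReal.ofReal (u ⬝ᵥ G *ᵥ u) :=
        matrixSpectralRadius_diagonal_mul_le hG_nonneg hρ.le
          (fun v hv => dotProduct_mulVec_le_of_isMaxOn hmax hv) hσ hσ1
    _ ≤ ENNReal.ofReal r := ENNReal.ofReal_le_ofReal hρr
    _ ≤ matrixSpectralRadius (diagonal σstar * G) := ofReal_le_matrixSpectralRadius hqw0 hqw

/-- an allocation that is optimal for the success probability objective
maximizes the spectral radius `ρ(diag(σ)·G)` among feasible allocations. -/
theorem statement_12 {n : ℕ} (G : Matrix (Fin n) (Fin n) ℝ)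
    (hG_symm : G.IsSymm)
    (hG_nonneg : ∀ i j, 0 ≤ G i j)
    (hG_diag : ∀ i, G i i = 0)
    (hG_ne : G ≠ 0)
    (β : ℝ) (hβ : 0 < β)
    (P : ℝ → ℝ)
    (hP_mono : StrictMonoOn P (Set.Ici (0:ℝ)))
    (hP_conc : ConcaveOn ℝ (Set.Ici (0:ℝ)) P)
    (hP_range : ∀ y : ℝ, 0 ≤ y → P y ∈ Set.Ico (0:ℝ) 1)
    (hP_diff : ∀ y : ℝ, 0 ≤ y → DifferentiableAt ℝ P y)
    (hP_diff2 : ∀ y : ℝ, 0 ≤ y → DifferentiableAt ℝ (deriv P) y)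
    (astar : (Fin n → ℝ) → Fin n → ℝ) (Ystar : (Fin n → ℝ) → ℝ)
    (heqm : ∀ σ : Fin n → ℝ, (∀ i, 0 ≤ σ i) → eqmCond G β P σ (astar σ) (Ystar σ))
    (σstar : Fin n → ℝ) (hσnn : ∀ i, 0 ≤ σstar i) (hσsum : ∑ i, σstar i ≤ 1)
    (hopt : ∀ σ : Fin n → ℝ, (∀ i, 0 ≤ σ i) → ∑ i, σ i ≤ 1 →
      P (Ystar σ) ≤ P (Ystar σstar)) :
    ∀ σ : Fin n → ℝ, (∀ i, 0 ≤ σ i) → ∑ i, σ i ≤ 1 →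
      matrixSpectralRadius (Matrix.diagonal σ * G)
        ≤ matrixSpectralRadius (Matrix.diagonal σstar * G) :=
  statement_12_general G hG_symm hG_nonneg hG_ne β hβ P hP_mono hP_conc hP_diff astar Ystar heqm
    σstar hσnn hσsum hopt
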